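/- Let C^trop : ℝ → 𝕋^d be defined so that C^trop(λ) is the coordinatewise maximum (barycenter) of a tropically convex set P intersected with {x | f(x) ≤ λ}, where f(x) = max_k (c_k + x_k) for a fixed c ∈ 𝕋^d. Then C^trop is monotone and 1-Lipschitz: for λ ≤ λ' the barycenter b(λ) of the λ-sublevel set and b(λ') of the λ'-sublevel set satisfy b(λ)_k ≤ b(λ')_k ≤ b(λ)_k + (λ' − λ) for all coordinates k, provided both barycenters exist and f takes finite value on them. -/

import Mathlib

/-!
The sublevel sets of `f = ⨆ k, c k + x k` grow with the level, so their greatest elements grow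
too. For the Lipschitz bound, shift the greatest element `b'` of the `λ + t`-sublevel set down
by `t`: the tropical combination `b ⊕ ((-t) ⊙ b')` stays in `P` and has `f`-value at most `λ`,
so it lies below the greatest element `b` of the `λ`-sublevel set, and thus `b' - t ≤ b`.
-/

/-- Tropical convexity in `𝕋^d` with `𝕋 = ℝ ∪ {-∞}` embedded in `EReal`. -/
def TropConvex {d : ℕ} (C : Set (Fin d → EReal)) : Prop :=
  ∀ u ∈ C, ∀ v ∈ C, ∀ a b : EReal, max a b = 0 →
    (fun i => max (a + u i) (b + v i)) ∈ C

def tropSublevel {d : ℕ} (P : Set (Fin d → EReal)) (c : Fin d → EReal) (lam : EReal) :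
    Set (Fin d → EReal) :=
  {x ∈ P | (⨆ k, c k + x k) ≤ lam}

theorem tropSublevel_mono {d : ℕ} (P : Set (Fin d → EReal)) (c : Fin d → EReal) :
    Monotone (tropSublevel P c) :=
  fun _ _ hle _ hx => ⟨hx.1, hx.2.trans hle⟩

theorem iSup_add_max_le {ι : Sort*} {c u v : ι → EReal} {a b α β : EReal}
    (hu : (⨆ k, c k + u k) ≤ α) (hv : (⨆ k, c k + v k) ≤ β) :
    (⨆ k, c k + max (a + u k) (b + v k)) ≤ max (a + α) (b + β) := by
  refine iSup_le fun k => ?_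
  rw [← max_add_add_left, add_left_comm, add_left_comm (c k) b]
  gcongr
  · exact (le_iSup (fun k => c k + u k) k).trans hu
  · exact (le_iSup (fun k => c k + v k) k).trans hv

theorem EReal.neg_coe_add_add_coe (x : EReal) (t : ℝ) : ((-t : ℝ) : EReal) + (x + t) = x := by
  rw [add_left_comm, ← EReal.coe_add, neg_add_cancel, EReal.coe_zero, add_zero]

theorem IsGreatest.le_add_of_mem_tropSublevel {d : ℕ} {P : Set (Fin d → EReal)}
    (hP : TropConvex P) {c b x : Fin d → EReal} {lam : EReal} {t : ℝ} (ht : 0 ≤ t)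
    (hb : IsGreatest (tropSublevel P c lam) b) (hx : x ∈ tropSublevel P c (lam + t)) (k : Fin d) :
    x k ≤ b k + t := by
  have hshift : max (0 : EReal) ((-t : ℝ) : EReal) = 0 :=
    max_eq_left (EReal.coe_nonpos.2 (neg_nonpos.2 ht))
  have hcomb : (fun i => max (0 + b i) (((-t : ℝ) : EReal) + x i)) ∈ tropSublevel P c lam := by
    refine ⟨hP b hb.1.1 x hx.1 0 _ hshift, ?_⟩
    simpa only [zero_add, EReal.neg_coe_add_add_coe, max_self] using
      iSup_add_max_le (a := 0) (b := ((-t : ℝ) : EReal)) hb.1.2 hx.2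
  have hlow : ((-t : ℝ) : EReal) + x k ≤ b k := (le_max_right _ _).trans (hb.2 hcomb k)
  calc x k = ((t : ℝ) : EReal) + (((-t : ℝ) : EReal) + x k) := by
        rw [← add_assoc, ← EReal.coe_add, add_neg_cancel, EReal.coe_zero, zero_add]
    _ ≤ t + b k := by gcongr
    _ = b k + t := add_comm _ _

theorem tropical_central_path_monotone_lipschitz_general {d : ℕ}
    (P : Set (Fin d → EReal)) (hP : TropConvex P) (c : Fin d → EReal)
    (lam lam' : ℝ) (hll : lam ≤ lam') (b b' : Fin d → EReal)
    (hbP : b ∈ P) (hbf : (⨆ k, c k + b k) ≤ (lam : EReal))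
    (hbmax : ∀ x ∈ P, (⨆ k, c k + x k) ≤ (lam : EReal) → x ≤ b)
    (hb'P : b' ∈ P) (hb'f : (⨆ k, c k + b' k) ≤ (lam' : EReal))
    (hb'max : ∀ x ∈ P, (⨆ k, c k + x k) ≤ (lam' : EReal) → x ≤ b') :
    ∀ k, b k ≤ b' k ∧ b' k ≤ b k + ((lam' - lam : ℝ) : EReal) := by
  have hb : IsGreatest (tropSublevel P c lam) b := ⟨⟨hbP, hbf⟩, fun x hx => hbmax x hx.1 hx.2⟩
  have hb' : IsGreatest (tropSublevel P c lam') b' :=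
    ⟨⟨hb'P, hb'f⟩, fun x hx => hb'max x hx.1 hx.2⟩
  have hlam' : (lam' : EReal) = lam + ((lam' - lam : ℝ) : EReal) := by
    rw [← EReal.coe_add, add_sub_cancel]
  intro k
  refine ⟨hb.mono hb' (tropSublevel_mono P c (EReal.coe_le_coe_iff.2 hll)) k, ?_⟩
  exact hb.le_add_of_mem_tropSublevel hP (sub_nonneg.2 hll) (hlam' ▸ hb'.1) k

/-- Monotonicity and 1-Lipschitz property of the tropical central path: if `b` and `b'` are
the tropical barycenters of the sublevel sets `P ∩ {f ≤ λ}` and `P ∩ {f ≤ λ'}` for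
`f(x) = max_k (c_k + x_k)` and `λ ≤ λ'`, then `b_k ≤ b'_k ≤ b_k + (λ' - λ)`. -/
theorem tropical_central_path_monotone_lipschitz {d : ℕ}
    (P : Set (Fin d → EReal)) (hP : TropConvex P) (c : Fin d → EReal)
    (lam lam' : ℝ) (hll : lam ≤ lam') (b b' : Fin d → EReal)
    (hbP : b ∈ P) (hbf : (⨆ k, c k + b k) ≤ (lam : EReal))
    (hbmax : ∀ x ∈ P, (⨆ k, c k + x k) ≤ (lam : EReal) → x ≤ b)
    (hb'P : b' ∈ P) (hb'f : (⨆ k, c k + b' k) ≤ (lam' : EReal))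
    (hb'max : ∀ x ∈ P, (⨆ k, c k + x k) ≤ (lam' : EReal) → x ≤ b')
    (hfb : (⨆ k, c k + b k) ≠ ⊥) (hfb' : (⨆ k, c k + b' k) ≠ ⊥) :
    ∀ k, b k ≤ b' k ∧ b' k ≤ b k + ((lam' - lam : ℝ) : EReal) :=
  tropical_central_path_monotone_lipschitz_general P hP c lam lam' hll b b' hbP hbf hbmax hb'P hb'f
    hb'max
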